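/- Let N be a finite set and v : Set N → ℝ. For any choice of real numbers (γ_T)_{T ⊆ N}, define v_and(T) = 0.5·v(T) + γ_T and v_or(T) = 0.5·v(T) − γ_T. Then v_and(T) + v_or(T) = v(T) for all T, and consequently for every T ⊆ N, v(T) = ∑_{S ⊆ T} I_and(S) + I_or(∅) + ∑_{S ∩ T ≠ ∅} I_or(S), where I_and is the AND interaction of v_and and I_or the OR interaction of v_or. -/

import Mathlib

/-! AND interactions are the Möbius transform of `v_and` on the subset lattice, so summing them
over `S ⊆ T` returns `v_and T`. For `S ≠ ∅`, OR interactions are minus the Möbius transform of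
`L ↦ v_or (N \ L)`: summed over all `S` this transform gives `v_or ∅`, and over the `S` disjoint
from `T` (the subsets of `N \ T`) it gives `v_or T`. Hence the right-hand side equals
`v_and T + v_or T = v T`, whatever `γ` is. -/

open Finset MeasureTheory

variable {N : Type*} [Fintype N] [DecidableEq N]

noncomputable def Iand (v : Finset N → ℝ) (S : Finset N) : ℝ :=
  ∑ T ∈ S.powerset, (-1 : ℝ) ^ (S.card - T.card) * v T

noncomputable def Ior (v : Finset N → ℝ) (S : Finset N) : ℝ :=
  if S = ∅ then v ∅
  else -∑ T ∈ S.powerset, (-1 : ℝ) ^ (S.card - T.card) * v (Finset.univ \ T)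

theorem Finset.sum_Icc_neg_one_pow_card_sub {α R : Type*} [DecidableEq α] [Ring R]
    {s t : Finset α} (h : s ⊆ t) :
    ∑ u ∈ Icc s t, (-1 : R) ^ (u.card - s.card) = if s = t then 1 else 0 := by
  have hdisj {m} (hm : m ∈ (t \ s).powerset) : Disjoint s m :=
    disjoint_sdiff.mono_right (mem_powerset.1 hm)
  rw [Icc_eq_image_powerset h, sum_image fun a ha b hb hab => by
    rw [← union_sdiff_cancel_left (hdisj ha), hab, union_sdiff_cancel_left (hdisj hb)]]
  calc ∑ m ∈ (t \ s).powerset, (-1 : R) ^ ((s ∪ m).card - s.card)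
      = ∑ m ∈ (t \ s).powerset, (-1 : R) ^ m.card :=
        sum_congr rfl fun m hm => by
          rw [card_union_of_disjoint (hdisj hm), Nat.add_sub_cancel_left]
    _ = if t \ s = ∅ then 1 else 0 := by
        have := congrArg (Int.cast : ℤ → R) (sum_powerset_neg_one_pow_card (x := t \ s))
        push_cast at this
        exact this
    _ = if s = t then 1 else 0 :=
        if_congr (sdiff_eq_empty_iff_subset.trans ⟨subset_antisymm h, ge_of_eq⟩) rfl rfl

theorem sum_powerset_Iand {α : Type*} [DecidableEq α] (u : Finset α → ℝ) (T : Finset α) :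
    ∑ S ∈ T.powerset, Iand u S = u T := by
  unfold Iand
  rw [sum_comm' (t' := T.powerset) (s' := fun L => Icc L T) fun S L => by
    simp only [mem_powerset, mem_Icc]; tauto]
  calc ∑ L ∈ T.powerset, ∑ S ∈ Icc L T, (-1 : ℝ) ^ (S.card - L.card) * u L
      = ∑ L ∈ T.powerset, (if L = T then 1 else 0) * u L :=
        sum_congr rfl fun L hL => by
          rw [← sum_mul, sum_Icc_neg_one_pow_card_sub (mem_powerset.1 hL)]
    _ = u T := by simp

theorem Ior_eq_neg_Iand_compl (w : Finset N → ℝ) {S : Finset N} (hS : S ≠ ∅) :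
    Ior w S = -Iand (fun L => w (univ \ L)) S :=
  if_neg hS

theorem Ior_empty_add_sum_Ior_of_inter_nonempty (w : Finset N → ℝ) (T : Finset N) :
    Ior w ∅ + ∑ S ∈ univ.powerset.filter (fun S => (S ∩ T).Nonempty), Ior w S = w T := by
  have hsplit : univ.powerset.filter (fun S => (S ∩ T).Nonempty) =
      univ.powerset \ (univ \ T).powerset := by
    ext S; simp [subset_sdiff, disjoint_iff_inter_eq_empty, nonempty_iff_ne_empty]
  have hIor : ∀ S ∈ univ.powerset \ (univ \ T).powerset,
      Ior w S = -Iand (fun L => w (univ \ L)) S := fun S hS =>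
    Ior_eq_neg_Iand_compl w (by rintro rfl; simp at hS)
  have hsum := sum_sdiff (f := Iand fun L => w (univ \ L))
    (powerset_mono.2 (subset_univ (univ \ T)))
  rw [sum_powerset_Iand, sum_powerset_Iand, Finset.sdiff_sdiff_eq_self (subset_univ T),
    Finset.sdiff_self] at hsum
  have hIor_empty : Ior w ∅ = w ∅ := if_pos rfl
  rw [hsplit, sum_congr rfl hIor, sum_neg_distrib, hIor_empty]
  linarith

theorem gamma_decomposition_universal_matching (v : Finset N → ℝ) (γ : Finset N → ℝ) :
    (∀ T : Finset N, (0.5 * v T + γ T) + (0.5 * v T - γ T) = v T) ∧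
    (∀ T : Finset N,
      v T = (∑ S ∈ T.powerset, Iand (fun L => 0.5 * v L + γ L) S) +
        Ior (fun L => 0.5 * v L - γ L) ∅ +
        ∑ S ∈ Finset.univ.powerset.filter (fun S => (S ∩ T).Nonempty),
          Ior (fun L => 0.5 * v L - γ L) S) := by
  refine ⟨fun T => by ring, fun T => ?_⟩
  rw [add_assoc, sum_powerset_Iand, Ior_empty_add_sum_Ior_of_inter_nonempty]
  ring
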